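/- Let (G, L, c, r, e_r) be a rooted WRAP instance with a non-shortenable directed WRAP solution F⃗, let v ∈ V \ {r}, and let X ⊆ L be a festoon. Then X contains a link incident to a v-good vertex if and only if the festoon interval I_X contains a v-good vertex. -/

import Mathlib

/-!
Common definitions for the Weighted Ring Augmentation Problem (WRAP).

A rooted WRAP instance `(G, L, c, r, e_r)` has a ring graph `G` whose
vertices we identify with `Fin n`, numbered `r = 0, 1, …, n-1` in the order
in which they appear along the path `(V, E \ {e_r})` starting at the root
`r = 0`.  Vertex `i` is to the left of `j` iff `i < j`.
-/

/-- An undirected link: an unordered pair of distinct vertices of the ring,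
recorded via its left endpoint `lo` and its right endpoint `hi`. -/
structure Link (n : ℕ) where
  lo : Fin n
  hi : Fin n
  lo_lt_hi : lo < hi

instance {n : ℕ} : DecidableEq (Link n) := fun a b =>
  decidable_of_iff (a.lo = b.lo ∧ a.hi = b.hi) (by cases a; cases b; simp)

/-- A directed link: an ordered pair of distinct vertices. -/
structure DLink (n : ℕ) where
  tail : Fin n
  head : Fin n
  ne : tail ≠ head

instance {n : ℕ} : DecidableEq (DLink n) := fun a b =>
  decidable_of_iff (a.tail = b.tail ∧ a.head = b.head) (by cases a; cases b; simp)

variable {n : ℕ}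

/-- The underlying undirected link of a directed link. -/
def DLink.toLink (d : DLink n) : Link n :=
  ⟨min d.tail d.head, max d.tail d.head, min_lt_max.mpr d.ne⟩

/-- `ℓ` is incident to `v`. -/
def Link.Incident (ℓ : Link n) (v : Fin n) : Prop := ℓ.lo = v ∨ ℓ.hi = v

/-- The 2-cuts `C_G` of the ring: the nonempty intervals of consecutive
vertices along the path `(V, E \ {e_r})` that do not contain the root `0`. -/
def IsCut [NeZero n] (C : Finset (Fin n)) : Prop :=
  ∃ a b : Fin n, 0 < a ∧ a ≤ b ∧ C = Finset.Icc a b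

/-- `ℓ` has exactly one endpoint in `C`. -/
def crossesCut (ℓ : Link n) (C : Finset (Fin n)) : Prop :=
  (ℓ.lo ∈ C ∧ ℓ.hi ∉ C) ∨ (ℓ.lo ∉ C ∧ ℓ.hi ∈ C)

instance (ℓ : Link n) (C : Finset (Fin n)) : Decidable (crossesCut ℓ C) := by
  unfold crossesCut; infer_instance

/-- `δ_K(C)`: the links of `K` with exactly one endpoint in `C`. -/
def cutLinks (K : Finset (Link n)) (C : Finset (Fin n)) : Finset (Link n) :=
  K.filter (fun ℓ => crossesCut ℓ C)

/-- An (undirected) WRAP solution: every 2-cut is covered by some link. -/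
def IsSolution [NeZero n] (S : Finset (Link n)) : Prop :=
  ∀ C : Finset (Fin n), IsCut C → (cutLinks S C).Nonempty

/-- A directed link covers a 2-cut if it enters it. -/
def DCovers (d : DLink n) (C : Finset (Fin n)) : Prop := d.tail ∉ C ∧ d.head ∈ C

/-- A directed WRAP solution: every 2-cut is entered by some directed link. -/
def IsDirSolution [NeZero n] (F : Finset (DLink n)) : Prop :=
  ∀ C : Finset (Fin n), IsCut C → ∃ d ∈ F, DCovers d C

/-- `d'` is a shortening of `d`: same head, and the tail of `d'` lies on the
unique path between the endpoints of `d` in `(V, E \ {e_r})`. -/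
def IsShortening (d' d : DLink n) : Prop :=
  d'.head = d.head ∧ min d.tail d.head ≤ d'.tail ∧ d'.tail ≤ max d.tail d.head

/-- A non-shortenable directed WRAP solution: deleting any link, or replacing
any link by a strict shortening of it, destroys feasibility. -/
def NonShortenable [NeZero n] (F : Finset (DLink n)) : Prop :=
  IsDirSolution F ∧
    (∀ d ∈ F, ¬ IsDirSolution (F.erase d)) ∧
    (∀ d ∈ F, ∀ d' : DLink n, IsShortening d' d → d' ≠ d →
      ¬ IsDirSolution (insert d' (F.erase d)))

/-- `d` is a shadow of the undirected link `ℓ`: a shortening of one of the two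
orientations of `ℓ`. -/
def IsShadow (d : DLink n) (ℓ : Link n) : Prop :=
  (d.head = ℓ.lo ∨ d.head = ℓ.hi) ∧ ℓ.lo ≤ d.tail ∧ d.tail ≤ ℓ.hi

/-- `u` is a descendant of `v` in `(V, F)` (every vertex is a descendant of
itself). -/
def Descend (F : Finset (DLink n)) (v u : Fin n) : Prop :=
  Relation.ReflTransGen (fun a b => ∃ d ∈ F, d.tail = a ∧ d.head = b) v u

/-- `u` is `v`-good: not a descendant of `v` in `(V, F)`. -/
def VGood (F : Finset (DLink n)) (v u : Fin n) : Prop := ¬ Descend F v u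

/-- `w` is the least common ancestor of the vertex set `U` in `(V, F)`. -/
def IsLCA (F : Finset (DLink n)) (w : Fin n) (U : Set (Fin n)) : Prop :=
  (∀ u ∈ U, Descend F w u) ∧ ∀ x : Fin n, (∀ u ∈ U, Descend F x u) → Descend F x w

/-- `d = (u,v)` is responsible for the 2-cut `C`: it covers `C` and no
directed link of `F` on the `r`–`u` path in the arborescence `(V, F)`
(i.e. no link of `F` whose head is an ancestor of `u`) covers `C`. -/
def Responsible [NeZero n] (F : Finset (DLink n)) (d : DLink n)
    (C : Finset (Fin n)) : Prop :=
  IsCut C ∧ DCovers d C ∧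
    ∀ d' ∈ F, Descend F d'.head d.tail → ¬ DCovers d' C

/-- `Drop_F(K)`: directed links of `F` all of whose responsible cuts
are covered by `K`. -/
def Drop [NeZero n] (F : Finset (DLink n)) (K : Finset (Link n)) : Set (DLink n) :=
  {d | d ∈ F ∧ ∀ C : Finset (Fin n), Responsible F d C → (cutLinks K C).Nonempty}

/-- Two links are crossing: their endpoints interleave along the ring. -/
def Crossing (ℓ f : Link n) : Prop :=
  (ℓ.lo < f.lo ∧ f.lo < ℓ.hi ∧ ℓ.hi < f.hi) ∨
  (f.lo < ℓ.lo ∧ ℓ.lo < f.hi ∧ f.hi < ℓ.hi)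

/-- Two links intersect: they share an endpoint or cross. -/
def Intersects (ℓ f : Link n) : Prop :=
  (ℓ.lo = f.lo ∨ ℓ.lo = f.hi ∨ ℓ.hi = f.lo ∨ ℓ.hi = f.hi) ∨ Crossing ℓ f

/-- The vertex `u` is connected to the vertex `w` in the link intersection
graph `H[K]`: there is a path in `H[K]` from a link incident to `u` to a link
incident to `w`. -/
def ConnVert (K : Finset (Link n)) (u w : Fin n) : Prop :=
  ∃ ℓ ∈ K, ∃ f ∈ K, ℓ.Incident u ∧ f.Incident w ∧
    Relation.ReflTransGen (fun a b => a ∈ K ∧ b ∈ K ∧ Intersects a b) ℓ f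

/-- The link intersection graph `H[S]` is connected. -/
def ConnLinkSet (S : Finset (Link n)) : Prop :=
  ∀ ℓ ∈ S, ∀ f ∈ S,
    Relation.ReflTransGen (fun a b => a ∈ S ∧ b ∈ S ∧ Intersects a b) ℓ f

/-- `V(S)`: the vertices incident to a link of `S`. -/
def linkVerts (S : Finset (Link n)) : Set (Fin n) := {v | ∃ ℓ ∈ S, ℓ.Incident v}

/-- A festoon order: the links (listed as `f 0, f 1, …`) form a path in the
link intersection graph visited in this order, with both left endpoints and
right endpoints strictly increasing. -/
def IsFestoonSeq {p : ℕ} (f : Fin p → Link n) : Prop :=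
  (∀ i j : Fin p, i < j → (f i).lo < (f j).lo ∧ (f i).hi < (f j).hi) ∧
  (∀ i j : Fin p, (i : ℕ) + 1 = (j : ℕ) → Intersects (f i) (f j)) ∧
  (∀ i j : Fin p, (i : ℕ) + 1 < (j : ℕ) → ¬ Intersects (f i) (f j))

/-- A festoon: a nonempty link set admitting a festoon order. -/
def IsFestoon (X : Finset (Link n)) : Prop :=
  ∃ p : ℕ, 0 < p ∧ ∃ f : Fin p → Link n,
    IsFestoonSeq f ∧ X = Finset.image f Finset.univ

/-- The festoon interval `I_X`: the interval from the leftmost endpoint of a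
link of `X` to the rightmost endpoint of a link of `X`. -/
def festoonIval (X : Finset (Link n)) : Set (Fin n) :=
  {w | (∃ ℓ ∈ X, ℓ.lo ≤ w) ∧ ∃ ℓ ∈ X, w ≤ ℓ.hi}

/-- Two festoons are tangled: some link of one intersects some link of the
other. -/
def Tangled (X Y : Finset (Link n)) : Prop :=
  ∃ ℓ ∈ X, ∃ f ∈ Y, Intersects ℓ f

/-- A laminar family of vertex sets: any two members are nested or disjoint. -/
def Laminar (𝓛 : Set (Finset (Fin n))) : Prop :=
  ∀ A ∈ 𝓛, ∀ B ∈ 𝓛, A ⊆ B ∨ B ⊆ A ∨ Disjoint A B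

/-- An inclusion-wise maximal laminar subfamily of `C_G`. -/
def MaxLaminarCuts [NeZero n] (𝓛 : Set (Finset (Fin n))) : Prop :=
  (∀ C ∈ 𝓛, IsCut C) ∧ Laminar 𝓛 ∧
    ∀ C : Finset (Fin n), IsCut C → C ∉ 𝓛 → ¬ Laminar (insert C 𝓛)

/-- An `α`-thin link set. -/
def IsThin [NeZero n] (α : ℕ) (K : Finset (Link n)) : Prop :=
  ∃ 𝓛 : Set (Finset (Fin n)), MaxLaminarCuts 𝓛 ∧ ∀ C ∈ 𝓛, (cutLinks K C).card ≤ α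

/-- The set `𝒳` of festoons connects `v` to a `v`-good vertex. -/
def ConnectsToGood (F : Finset (DLink n)) (v : Fin n)
    (𝒳 : Finset (Finset (Link n))) : Prop :=
  ∃ w : Fin n, VGood F v w ∧ ConnVert (𝒳.biUnion id) v w

/-- The undirected graph obtained from a set of directed links by
disregarding orientations. -/
def undirGraph (F : Finset (DLink n)) : SimpleGraph (Fin n) where
  Adj a b := ∃ d ∈ F, (d.tail = a ∧ d.head = b) ∨ (d.tail = b ∧ d.head = a)
  symm := by
    constructor
    rintro a b ⟨d, hd, h⟩
    exact ⟨d, hd, h.symm⟩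
  loopless := by
    constructor
    rintro a ⟨d, hd, h⟩
    rcases h with ⟨h1, h2⟩ | ⟨h1, h2⟩ <;> exact d.ne (h1.trans h2.symm)

/-- A directed link going to the left along the ring. -/
def LeftGoing (d : DLink n) : Prop := d.head < d.tail

/-- A directed link going to the right along the ring. -/
def RightGoing (d : DLink n) : Prop := d.tail < d.head

/-!
The descendants of `v` in a non-shortenable solution form an interval of the path
`(V, E \ {e_r})`; then a vertex of `I_X` lies between the endpoints of some link of `X`, and
if both endpoints were descendants of `v`, so would be the vertex. The interval property
reduces to the case of a single arc `(t, h)`: shortening it to `(w, h)` must uncover a cut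
containing `w` that only `(t, h)` enters, and within that cut the non-descendants of `t`
would form a nonempty set in which every vertex has a parent, i.e. a cycle of `F`.
Non-shortenable solutions are acyclic because, at the leftmost vertex of a cycle, the tight
cuts of a left-going arc of the cycle and of the right-going arc that leaves it combine into a
cut that nobody enters.
-/

section NonShortenable

open Finset

variable [NeZero n] {F : Finset (DLink n)}

def SoleCover (F : Finset (DLink n)) (d : DLink n) (C : Finset (Fin n)) : Prop :=
  DCovers d C ∧ ∀ e ∈ F, DCovers e C → e = d

lemma IsDirSolution.soleCover {d : DLink n} {C : Finset (Fin n)} (hF : IsDirSolution F)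
    (hC : IsCut C) (hd : ∀ e ∈ F.erase d, ¬ DCovers e C) : SoleCover F d C := by
  obtain ⟨e, he, hcov⟩ := hF C hC
  have hed : e = d := by_contra fun hne => hd e (mem_erase.mpr ⟨hne, he⟩) hcov
  subst hed
  exact ⟨hcov, fun e' he' hcov' => by_contra fun hne => hd e' (mem_erase.mpr ⟨hne, he'⟩) hcov'⟩

lemma NonShortenable.exists_soleCover {d : DLink n} (hF : NonShortenable F) (hd : d ∈ F)
    {w : Fin n} (hw : w ∈ Set.uIcc d.tail d.head) (hwt : w ≠ d.tail) :
    ∃ C, IsCut C ∧ SoleCover F d C ∧ w ∈ C := by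
  by_cases hwh : w = d.head
  · have h := hF.2.1 d hd
    simp only [IsDirSolution, not_forall, not_exists, not_and] at h
    obtain ⟨C, hC, hnone⟩ := h
    have hsole := hF.1.soleCover hC hnone
    exact ⟨C, hC, hsole, hwh ▸ hsole.1.2⟩
  · let d' : DLink n := ⟨w, d.head, hwh⟩
    have hshort : IsShortening d' d := ⟨rfl, hw⟩
    have h := hF.2.2 d hd d' hshort fun h => hwt (congrArg DLink.tail h)
    simp only [IsDirSolution, not_forall, not_exists, not_and] at h
    obtain ⟨C, hC, hnone⟩ := h
    have hsole := hF.1.soleCover hC fun e he => hnone e (mem_insert_of_mem he)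
    have hwC : w ∈ C := by_contra fun hwC => hnone d' (mem_insert_self _ _) ⟨hwC, hsole.1.2⟩
    exact ⟨C, hC, hsole, hwC⟩

/-- The cut entered only by `e` that contains `e.tail - 1` and the cut entered only by `f` that
contains `f.tail + 1` combine into a cut that no arc enters. -/
lemma NonShortenable.not_head_le_tail_lt_tail_le_head (hF : NonShortenable F) {e f : DLink n}
    (he : e ∈ F) (hf : f ∈ F) : ¬ (e.head ≤ f.tail ∧ f.tail < e.tail ∧ e.tail ≤ f.head) := by
  rintro ⟨h₁, h₂, h₃⟩
  obtain ⟨_, ⟨a, b, ha, -, rfl⟩, ⟨he₁, he₁only⟩, hw₁⟩ := hF.exists_soleCover he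
    (w := ⟨e.tail - 1, by omega⟩) (Set.mem_uIcc.mpr (Or.inr ⟨Fin.le_def.mpr (by simp only; omega),
      Fin.le_def.mpr (by simp only; omega)⟩)) (Fin.ne_of_val_ne (by simp only; omega))
  obtain ⟨_, ⟨a', b', -, -, rfl⟩, ⟨hf₂, hf₂only⟩, hw₂⟩ := hF.exists_soleCover hf
    (w := ⟨f.tail + 1, by omega⟩) (Set.mem_uIcc.mpr (Or.inl ⟨Fin.le_def.mpr (by simp only; omega),
      Fin.le_def.mpr (by simp only; omega)⟩)) (Fin.ne_of_val_ne (by simp only; omega))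
  simp only [DCovers, mem_Icc, Fin.le_def] at he₁ hw₁ hf₂ hw₂
  obtain ⟨g, hg, hgt, hgh⟩ := hF.1 (Icc a b') ⟨a, b', ha, Fin.le_def.mpr (by omega), rfl⟩
  simp only [mem_Icc, Fin.le_def] at hgt hgh
  by_cases hgb : g.head ≤ b
  · have hge : g = e := he₁only g hg ⟨by simp only [mem_Icc]; omega, by simp only [mem_Icc]; omega⟩
    subst hge
    omega
  · have hgf : g = f := hf₂only g hg ⟨by simp only [mem_Icc]; omega, by simp only [mem_Icc]; omega⟩
    subst hgf
    omega

/-- Acyclicity of `(V, F)`. -/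
lemma NonShortenable.eq_empty_of_forall_exists_parent (hF : NonShortenable F)
    {S : Finset (Fin n)} (hS : ∀ u ∈ S, ∃ d ∈ F, d.head = u ∧ d.tail ∈ S) : S = ∅ := by
  induction S using Finset.strongInduction with
  | H S ih =>
  by_contra hne
  obtain ⟨m, hm, hmin⟩ := S.exists_min_image id (nonempty_iff_ne_empty.mpr hne)
  obtain ⟨e, he, rfl, het⟩ := hS m hm
  have hlt : e.head < e.tail := lt_of_le_of_ne (hmin _ het) e.ne.symm
  set S' := S.filter (e.tail ≤ ·)
  have hS' : S' ⊂ S := filter_ssubset.mpr ⟨e.head, hm, not_le.mpr hlt⟩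
  obtain ⟨u, hu, hnone⟩ : ∃ u ∈ S', ∀ f ∈ F, f.head = u → f.tail ∉ S' := by
    by_contra! h
    exact ne_empty_of_mem (mem_filter.mpr ⟨het, le_rfl⟩) (ih S' hS' h)
  obtain ⟨f, hf, rfl, hft⟩ := hS u (mem_filter.mp hu).1
  have hfe : f.tail < e.tail := not_le.mp fun h => hnone f hf rfl (mem_filter.mpr ⟨hft, h⟩)
  exact hF.not_head_le_tail_lt_tail_le_head he hf ⟨hmin _ hft, hfe, (mem_filter.mp hu).2⟩

lemma NonShortenable.descend_of_mem_uIcc (hF : NonShortenable F) {d : DLink n} (hd : d ∈ F)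
    {w : Fin n} (hw : w ∈ Set.uIcc d.tail d.head) : Descend F d.tail w := by
  classical
  by_cases hwt : w = d.tail
  · exact hwt ▸ Relation.ReflTransGen.refl
  obtain ⟨C, ⟨a, b, ha, -, rfl⟩, ⟨-, hdonly⟩, hwC⟩ := hF.exists_soleCover hd hw hwt
  let S := (Icc a b).filter (¬ Descend F d.tail ·)
  have hS : ∀ u ∈ S, ∃ e ∈ F, e.head = u ∧ e.tail ∈ S := by
    intro u hu
    obtain ⟨huC, hu⟩ := mem_filter.mp hu
    have hu0 : 0 < u := lt_of_lt_of_le ha (mem_Icc.mp huC).1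
    obtain ⟨e, he, het, heh⟩ := hF.1 (Icc u u) ⟨u, u, hu0, le_rfl, rfl⟩
    have heu : e.head = u := le_antisymm (mem_Icc.mp heh).2 (mem_Icc.mp heh).1
    refine ⟨e, he, heu, mem_filter.mpr ⟨?_, fun hdesc => hu (heu ▸ hdesc.tail ⟨e, he, rfl, rfl⟩)⟩⟩
    by_contra heC
    obtain rfl := hdonly e he ⟨heC, heu ▸ huC⟩
    exact hu (heu ▸ Relation.ReflTransGen.single ⟨e, he, rfl, rfl⟩)
  by_contra hdesc
  exact ne_empty_of_mem (mem_filter.mpr ⟨hwC, hdesc⟩) (hF.eq_empty_of_forall_exists_parent hS)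

lemma NonShortenable.ordConnected_descend (hF : NonShortenable F) (v : Fin n) :
    Set.OrdConnected {u | Descend F v u} := by
  refine Set.ordConnected_of_uIcc_subset_left (x := v) fun a ha => ?_
  induction ha with
  | refl =>
    rw [Set.uIcc_self, Set.singleton_subset_iff]
    exact Relation.ReflTransGen.refl
  | @tail b a _ hba ih =>
    obtain ⟨e, he, rfl, rfl⟩ := hba
    refine Set.uIcc_subset_uIcc_union_uIcc.trans (Set.union_subset ih fun w hw => ?_)
    exact (ih Set.right_mem_uIcc).trans (hF.descend_of_mem_uIcc he hw)

end NonShortenable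

lemma Intersects.lo_le_hi {ℓ f : Link n} (h : Intersects ℓ f) : f.lo ≤ ℓ.hi := by
  have := ℓ.lo_lt_hi
  have := f.lo_lt_hi
  rcases h with (h | h | h | h) | (h | h) <;> omega

lemma Link.Incident.mem_Icc {ℓ : Link n} {u : Fin n} (h : ℓ.Incident u) :
    u ∈ Set.Icc ℓ.lo ℓ.hi := by
  have := ℓ.lo_lt_hi
  exact Set.mem_Icc.mpr (by rcases h with rfl | rfl <;> omega)

lemma mem_festoonIval_of_mem_Icc {X : Finset (Link n)} {ℓ : Link n} (hℓ : ℓ ∈ X) {u : Fin n}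
    (hu : u ∈ Set.Icc ℓ.lo ℓ.hi) : u ∈ festoonIval X :=
  ⟨⟨ℓ, hℓ, hu.1⟩, ℓ, hℓ, hu.2⟩

/-- The spans of consecutive links of a festoon overlap, so they tile `I_X`: the last link
starting at or before `u` also ends at or after it. -/
lemma IsFestoon.exists_mem_Icc {X : Finset (Link n)} (hX : IsFestoon X) {u : Fin n}
    (hu : u ∈ festoonIval X) : ∃ ℓ ∈ X, u ∈ Set.Icc ℓ.lo ℓ.hi := by
  classical
  obtain ⟨p, -, f, ⟨hmono, hconsec, -⟩, rfl⟩ := hX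
  obtain ⟨⟨_, hℓ₁, hlo⟩, _, hℓ₂, hhi⟩ := hu
  obtain ⟨i, -, rfl⟩ := Finset.mem_image.mp hℓ₁
  obtain ⟨j, -, rfl⟩ := Finset.mem_image.mp hℓ₂
  obtain ⟨k, hk, hkmax⟩ := (Finset.univ.filter fun k => (f k).lo ≤ u).exists_max_image id
    ⟨i, Finset.mem_filter.mpr ⟨Finset.mem_univ i, hlo⟩⟩
  refine ⟨f k, Finset.mem_image_of_mem f (Finset.mem_univ k), (Finset.mem_filter.mp hk).2, ?_⟩
  by_cases hlast : (k : ℕ) + 1 < p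
  · let k' : Fin p := ⟨k + 1, hlast⟩
    have hk' : u < (f k').lo := not_le.mp fun h => by
      have := hkmax k' (Finset.mem_filter.mpr ⟨Finset.mem_univ k', h⟩)
      simp only [id, k', Fin.le_def] at this
      omega
    exact (hk'.trans_le (hconsec k k' rfl).lo_le_hi).le
  · rcases (Fin.le_def.mpr (by omega) : j ≤ k).eq_or_lt with rfl | hjk
    · exact hhi
    · exact hhi.trans (hmono j k hjk).2.le

theorem vgood_in_interval_iff_general {n : ℕ}
    (F : Finset (DLink (n + 3))) (hF : NonShortenable F)
    (v : Fin (n + 3))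
    (X : Finset (Link (n + 3))) (hX : IsFestoon X) :
    (∃ ℓ ∈ X, ∃ u : Fin (n + 3), Link.Incident ℓ u ∧ VGood F v u) ↔
      ∃ u ∈ festoonIval X, VGood F v u := by
  constructor
  · rintro ⟨ℓ, hℓ, u, hu, hgood⟩
    exact ⟨u, mem_festoonIval_of_mem_Icc hℓ hu.mem_Icc, hgood⟩
  · rintro ⟨u, hu, hgood⟩
    obtain ⟨ℓ, hℓ, huℓ⟩ := hX.exists_mem_Icc hu
    by_contra! hbad
    have hlo : Descend F v ℓ.lo := not_not.mp (hbad ℓ hℓ ℓ.lo (Or.inl rfl))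
    have hhi : Descend F v ℓ.hi := not_not.mp (hbad ℓ hℓ ℓ.hi (Or.inr rfl))
    exact hgood ((hF.ordConnected_descend v).out hlo hhi huℓ)

/-- for a non-shortenable directed WRAP solution `F`, a
vertex `v ≠ r`, and a festoon `X ⊆ L`, the festoon `X` contains a link
incident to a `v`-good vertex iff the festoon interval `I_X` contains a
`v`-good vertex. -/
theorem vgood_in_interval_iff {n : ℕ}
    (L : Finset (Link (n + 3))) (c : Link (n + 3) → ℝ)
    (F : Finset (DLink (n + 3))) (hF : NonShortenable F)
    (v : Fin (n + 3)) (hv : v ≠ 0)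
    (X : Finset (Link (n + 3))) (hXL : X ⊆ L) (hX : IsFestoon X) :
    (∃ ℓ ∈ X, ∃ u : Fin (n + 3), Link.Incident ℓ u ∧ VGood F v u) ↔
      ∃ u ∈ festoonIval X, VGood F v u :=
  vgood_in_interval_iff_general F hF v X hX
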